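/- In the logic S_fde^→ (Fitting's left-sequential four-valued logic), for every valuation v and all formulas A, B: v(A∨B) is designated if and only if v(A) is designated, or both v(¬A) and v(B) are designated. This establishes soundness of (∨I₁), (↔∨I′₂), and (→∨E′). -/
import Mathlib

inductive V4 : Type
  | T | B | N | F
deriving DecidableEq, Repr

def negS : V4 → V4
  | .T => .F
  | .B => .B
  | .N => .N
  | .F => .T

def andA : V4 → V4 → V4
  | .T, y => y
  | .B, .T => .B
  | .B, .B => .B
  | .B, .N => .F
  | .B, .F => .F
  | .N, _ => .N
  | .F, _ => .F

def orA : V4 → V4 → V4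
  | .T, _ => .T
  | .B, .T => .T
  | .B, .B => .B
  | .B, .N => .T
  | .B, .F => .B
  | .N, _ => .N
  | .F, y => y

inductive Fm : Type
  | var : Nat → Fm
  | neg : Fm → Fm
  | conj : Fm → Fm → Fm
  | disj : Fm → Fm → Fm

def eval (v : Nat → V4) : Fm → V4
  | .var p => v p
  | .neg A => negS (eval v A)
  | .conj A B => andA (eval v A) (eval v B)
  | .disj A B => orA (eval v A) (eval v B)

def des (x : V4) : Prop := x = V4.T ∨ x = V4.B

theorem sfde_arrow_disj_sound (v : Nat → V4) (A B : Fm) :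
    des (eval v (Fm.disj A B)) ↔
      des (eval v A) ∨ (des (eval v (Fm.neg A)) ∧ des (eval v B)) := by
  simp only [eval, des]
  rcases eval v A <;> rcases eval v B <;> simp [orA, negS]
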